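/- arXiv:2211.01052 — 3 statements merged into one kernel-verified Lean document; each statement's English description precedes it below -/
import Mathlib

section
/- Let S and A be finite nonempty sets, let d : S → ℝ satisfy d(s) > 0 for all s ∈ S, let π_β : S → A → ℝ be, for each s, a probability mass function over A with π_β(s)(a) > 0 for all a ∈ A, let π : S → A → ℝ be, for each s, a probability mass function over A, let T : S × A → ℝ, and let α ∈ ℝ. Define, for Q : S × A → ℝ, the objective J(Q) = α · ∑_{s ∈ S} d(s) · ∑_{a ∈ A} (π(s)(a) − π_β(s)(a)) · Q(s,a) + (1/2) · ∑_{s ∈ S} ∑_{a ∈ A} d(s) · π_β(s)(a) · (Q(s,a) − T(s,a))². Then the function Q* given by Q*(s,a) = T(s,a) − α · (π(s)(a)/π_β(s)(a) − 1) is the unique global minimizer of J over all functions Q : S × A → ℝ. -/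
theorem cql_unique_minimizer {S A : Type*} [Fintype S] [Fintype A]
    [Nonempty S] [Nonempty A]
    (d : S → ℝ) (hd : ∀ s, 0 < d s)
    (πβ : S → A → ℝ) (hπβ0 : ∀ s a, 0 < πβ s a) (hπβ1 : ∀ s, ∑ a, πβ s a = 1)
    (π : S → A → ℝ) (hπ0 : ∀ s a, 0 ≤ π s a) (hπ1 : ∀ s, ∑ a, π s a = 1)
    (T : S × A → ℝ) (α : ℝ)
    (J : (S × A → ℝ) → ℝ)
    (hJ : ∀ Q : S × A → ℝ,
      J Q = α * ∑ s, d s * ∑ a, (π s a - πβ s a) * Q (s, a) +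
        (1 / 2) * ∑ s, ∑ a, d s * πβ s a * (Q (s, a) - T (s, a)) ^ 2)
    (Qstar : S × A → ℝ)
    (hQstar : ∀ s a, Qstar (s, a) = T (s, a) - α * (π s a / πβ s a - 1)) :
    ∀ Q : S × A → ℝ, Q ≠ Qstar → J Qstar < J Q := by
  intro Q hQ
  have hne : ∃ p : S × A, Q p ≠ Qstar p := by
    by_contra h; push_neg at h; exact hQ (funext h)
  obtain ⟨⟨s0, a0⟩, hp⟩ := hne
  have expand : ∀ (R : S × A → ℝ),
      α * ∑ s, d s * ∑ a, (π s a - πβ s a) * R (s, a) +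
        (1 / 2) * ∑ s, ∑ a, d s * πβ s a * (R (s, a) - T (s, a)) ^ 2
      = ∑ s, ∑ a, (α * (d s * ((π s a - πβ s a) * R (s, a))) +
          (1 / 2) * (d s * πβ s a * (R (s, a) - T (s, a)) ^ 2)) := by
    intro R
    rw [Finset.mul_sum, Finset.mul_sum, ← Finset.sum_add_distrib]
    refine Finset.sum_congr rfl fun s _ => ?_
    rw [Finset.mul_sum, Finset.mul_sum, Finset.mul_sum, ← Finset.sum_add_distrib]
  have h1 : J Q - J Qstar
      = ∑ s, ∑ a, (1 / 2) * (d s * πβ s a) * (Q (s, a) - Qstar (s, a)) ^ 2 := by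
    rw [hJ, hJ, expand, expand, ← Finset.sum_sub_distrib]
    refine Finset.sum_congr rfl fun s _ => ?_
    rw [← Finset.sum_sub_distrib]
    refine Finset.sum_congr rfl fun a _ => ?_
    have hb := (hπβ0 s a).ne'
    rw [hQstar]
    field_simp
    ring
  have hpos : 0 < ∑ s, ∑ a, (1 / 2) * (d s * πβ s a) * (Q (s, a) - Qstar (s, a)) ^ 2 := by
    refine Finset.sum_pos' (fun s _ => Finset.sum_nonneg fun a _ => ?_) ⟨s0, Finset.mem_univ _, ?_⟩
    · have h1 := (hd s).le; have h2 := (hπβ0 s a).le; positivity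
    · refine Finset.sum_pos' (fun a _ => ?_) ⟨a0, Finset.mem_univ _, ?_⟩
      · have h1 := (hd s0).le; have h2 := (hπβ0 s0 a).le; positivity
      have h2 : (0:ℝ) < (Q (s0, a0) - Qstar (s0, a0)) ^ 2 := by
        have := sub_ne_zero_of_ne hp
        positivity
      have := mul_pos (hd s0) (hπβ0 s0 a0)
      nlinarith
  linarith [h1 ▸ hpos]
end

section
/- Let S and A be finite nonempty sets, let d : S → ℝ satisfy d(s) > 0 for all s ∈ S, let π_β : S → A → ℝ be, for each s, a probability mass function over A with π_β(s)(a) > 0 for all a ∈ A, let π : S → A → ℝ be, for each s, a probability mass function over A, let T : S × A → ℝ, let α > 0, and let Q* : S × A → ℝ be the unique minimizer of the tabular CQL objective J(Q) = α · ∑_{s} d(s) · ∑_{a} (π(s)(a) − π_β(s)(a)) · Q(s,a) + (1/2) · ∑_{s} ∑_{a} d(s) · π_β(s)(a) · (Q(s,a) − T(s,a))². Then for every (s,a): Q*(s,a) < T(s,a) if and only if π(s)(a) > π_β(s)(a); Q*(s,a) > T(s,a) if and only if π(s)(a) < π_β(s)(a); and Q*(s,a) = T(s,a) if and only if π(s)(a)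 = π_β(s)(a). -/
theorem cql_pessimism_directions {S A : Type*} [Fintype S] [Fintype A]
    [Nonempty S] [Nonempty A]
    (d : S → ℝ) (hd : ∀ s, 0 < d s)
    (πβ : S → A → ℝ) (hπβ0 : ∀ s a, 0 < πβ s a) (hπβ1 : ∀ s, ∑ a, πβ s a = 1)
    (π : S → A → ℝ) (hπ0 : ∀ s a, 0 ≤ π s a) (hπ1 : ∀ s, ∑ a, π s a = 1)
    (T : S × A → ℝ) (α : ℝ) (hα : 0 < α)
    (J : (S × A → ℝ) → ℝ)
    (hJ : ∀ Q : S × A → ℝ,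
      J Q = α * ∑ s, d s * ∑ a, (π s a - πβ s a) * Q (s, a) +
        (1 / 2) * ∑ s, ∑ a, d s * πβ s a * (Q (s, a) - T (s, a)) ^ 2)
    (Qstar : S × A → ℝ)
    (hQstar : ∀ Q : S × A → ℝ, Q ≠ Qstar → J Qstar < J Q) :
    ∀ s a, (Qstar (s, a) < T (s, a) ↔ π s a > πβ s a) ∧
      (Qstar (s, a) > T (s, a) ↔ π s a < πβ s a) ∧
      (Qstar (s, a) = T (s, a) ↔ π s a = πβ s a) := by
  set Qc : S × A → ℝ := fun p => T p - α * (π p.1 p.2 - πβ p.1 p.2) / πβ p.1 p.2 with hQc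
  -- J is written as a single double sum
  have hJ' : ∀ Q : S × A → ℝ, J Q = ∑ s, ∑ a,
      (α * (d s * ((π s a - πβ s a) * Q (s, a))) +
       1 / 2 * (d s * πβ s a * (Q (s, a) - T (s, a)) ^ 2)) := by
    intro Q
    rw [hJ Q, Finset.mul_sum, Finset.mul_sum, ← Finset.sum_add_distrib]
    refine Finset.sum_congr rfl fun s _ => ?_
    rw [Finset.mul_sum, Finset.mul_sum, Finset.mul_sum, ← Finset.sum_add_distrib]
  -- Qc minimizes J
  have hmin : ∀ Q : S × A → ℝ, J Qc ≤ J Q := by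
    intro Q
    rw [hJ' Q, hJ' Qc]
    apply Finset.sum_le_sum
    intro s _
    apply Finset.sum_le_sum
    intro a _
    have hβ := hπβ0 s a
    have hβ' : πβ s a ≠ 0 := ne_of_gt hβ
    have key : (α * (d s * ((π s a - πβ s a) * Q (s, a))) +
        1 / 2 * (d s * πβ s a * (Q (s, a) - T (s, a)) ^ 2)) -
        (α * (d s * ((π s a - πβ s a) * Qc (s, a))) +
        1 / 2 * (d s * πβ s a * (Qc (s, a) - T (s, a)) ^ 2)) =
        1 / 2 * (d s * πβ s a) * (Q (s, a) - Qc (s, a)) ^ 2 := by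
      simp only [hQc]
      field_simp
      ring
    nlinarith [mul_nonneg (mul_nonneg (by norm_num : (0:ℝ) ≤ 1/2)
      (mul_pos (hd s) hβ).le) (sq_nonneg (Q (s, a) - Qc (s, a)))]
  -- uniqueness forces Qstar = Qc
  have heq : Qstar = Qc := by
    by_contra h
    have h1 := hQstar Qc (fun h' => h h'.symm)
    exact absurd (hmin Qstar) (not_le.mpr h1)
  intro s a
  have hβ := hπβ0 s a
  have hval : Qstar (s, a) = T (s, a) - α * (π s a - πβ s a) / πβ s a := by
    rw [heq]
  have h1 : Qstar (s, a) - T (s, a) = -(α * (π s a - πβ s a) / πβ s a) := by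
    rw [hval]; ring
  constructor
  · constructor
    · intro h
      have : 0 < α * (π s a - πβ s a) / πβ s a := by linarith [h1 ▸ (by linarith : Qstar (s,a) - T (s,a) < 0)]
      have := (div_pos_iff.mp this)
      rcases this with ⟨h2, _⟩ | ⟨_, h3⟩
      · nlinarith
      · linarith
    · intro h
      have : 0 < α * (π s a - πβ s a) / πβ s a :=
        div_pos (mul_pos hα (by linarith)) hβ
      linarith [h1]
  constructor
  · constructor
    · intro h
      have hlt : α * (π s a - πβ s a) / πβ s a < 0 := by linarith [h1]
      rcases div_neg_iff.mp hlt with ⟨_, h3⟩ | ⟨h2, _⟩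
      · linarith
      · nlinarith
    · intro h
      have : α * (π s a - πβ s a) / πβ s a < 0 :=
        div_neg_of_neg_of_pos (by nlinarith) hβ
      linarith [h1]
  · constructor
    · intro h
      have h0 : α * (π s a - πβ s a) / πβ s a = 0 := by linarith [h1]
      have := (div_eq_zero_iff.mp h0)
      rcases this with h2 | h3
      · rcases mul_eq_zero.mp h2 with h4 | h5
        · linarith
        · linarith
      · linarith
    · intro h
      rw [hval, h]
      simp
end

section
/- Let S and A be finite nonempty sets, let d : S → ℝ satisfy d(s) > 0 for all s ∈ S, let π_β : S → A → ℝ be, for each s, a probability mass function over A with π_β(s)(a) > 0 for all a ∈ A, let π : S → A → ℝ be, for each s, a probability mass function over A, let g : S → A → ℝ, let T : S × A → ℝ, and let α ∈ ℝ. Define ρ : S → A → ℝ by ρ(s)(a) = π_β(s)(a) · g(s)(a), and define, for Q : S × A → ℝ, the objective J(Q) = α · ∑_{s ∈ S} d(s) · ∑_{a ∈ A} ( (1/2)·π(s)(a) + (1/2)·ρ(s)(a) − π_β(s)(a) ) · Q(s,a) + (1/2) · ∑_{s ∈ S} ∑_{a ∈ A} d(s) · π_β(s)(a) · (Q(s,a)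 − T(s,a))². Then the function Q* given by Q*(s,a) = T(s,a) − α · ( π(s)(a) + π_β(s)(a)·g(s)(a) − 2·π_β(s)(a) ) / ( 2·π_β(s)(a) ) is the unique global minimizer of J over all functions Q : S × A → ℝ. -/
theorem reds_cql_unique_minimizer {S A : Type*} [Fintype S] [Fintype A]
    [Nonempty S] [Nonempty A]
    (d : S → ℝ) (hd : ∀ s, 0 < d s)
    (πβ : S → A → ℝ) (hπβ0 : ∀ s a, 0 < πβ s a) (hπβ1 : ∀ s, ∑ a, πβ s a = 1)
    (π : S → A → ℝ) (hπ0 : ∀ s a, 0 ≤ π s a) (hπ1 : ∀ s, ∑ a, π s a = 1)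
    (g : S → A → ℝ) (T : S × A → ℝ) (α : ℝ)
    (ρ : S → A → ℝ) (hρ : ∀ s a, ρ s a = πβ s a * g s a)
    (J : (S × A → ℝ) → ℝ)
    (hJ : ∀ Q : S × A → ℝ,
      J Q = α * ∑ s, d s * ∑ a,
          ((1 / 2) * π s a + (1 / 2) * ρ s a - πβ s a) * Q (s, a) +
        (1 / 2) * ∑ s, ∑ a, d s * πβ s a * (Q (s, a) - T (s, a)) ^ 2)
    (Qstar : S × A → ℝ)
    (hQstar : ∀ s a, Qstar (s, a) =
      T (s, a) - α * (π s a + πβ s a * g s a - 2 * πβ s a) / (2 * πβ s a)) :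
    ∀ Q : S × A → ℝ, Q ≠ Qstar → J Qstar < J Q := by
  intro Q hQ
  have expand : ∀ (R : S × A → ℝ),
      α * ∑ s, d s * ∑ a, ((1 / 2) * π s a + (1 / 2) * ρ s a - πβ s a) * R (s, a) +
        (1 / 2) * ∑ s, ∑ a, d s * πβ s a * (R (s, a) - T (s, a)) ^ 2 =
      ∑ s, ∑ a, (α * (d s * (((1 / 2) * π s a + (1 / 2) * ρ s a - πβ s a) * R (s, a))) +
        (1 / 2) * (d s * πβ s a * (R (s, a) - T (s, a)) ^ 2)) := by
    intro R
    simp only [Finset.mul_sum]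
    rw [← Finset.sum_add_distrib]
    exact Finset.sum_congr rfl fun s _ => Finset.sum_add_distrib.symm
  have key : J Q - J Qstar =
      ∑ s, ∑ a, (1 / 2) * (d s * πβ s a * (Q (s, a) - Qstar (s, a)) ^ 2) := by
    rw [hJ Q, hJ Qstar, expand Q, expand Qstar, ← Finset.sum_sub_distrib]
    refine Finset.sum_congr rfl fun s _ => ?_
    rw [← Finset.sum_sub_distrib]
    refine Finset.sum_congr rfl fun a _ => ?_
    have hb : πβ s a ≠ 0 := (hπβ0 s a).ne'
    rw [hρ, hQstar]
    field_simp
    ring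
  obtain ⟨⟨s0, a0⟩, hp⟩ : ∃ p : S × A, Q p ≠ Qstar p := by
    by_contra h
    push_neg at h
    exact hQ (funext h)
  have hpos : 0 < ∑ s, ∑ a, (1 / 2) * (d s * πβ s a * (Q (s, a) - Qstar (s, a)) ^ 2) := by
    have hterm : ∀ s a, 0 ≤ (1 / 2) * (d s * πβ s a * (Q (s, a) - Qstar (s, a)) ^ 2) := by
      intro s a
      have h1 := (hd s).le
      have h2 := (hπβ0 s a).le
      positivity
    refine Finset.sum_pos' (fun s _ => Finset.sum_nonneg fun a _ => hterm s a) ⟨s0, Finset.mem_univ _, ?_⟩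
    refine Finset.sum_pos' (fun a _ => hterm s0 a) ⟨a0, Finset.mem_univ _, ?_⟩
    have hsq : 0 < (Q (s0, a0) - Qstar (s0, a0)) ^ 2 := by
      have : Q (s0, a0) - Qstar (s0, a0) ≠ 0 := sub_ne_zero_of_ne hp
      positivity
    have := hd s0
    have := hπβ0 s0 a0
    positivity
  linarith
end
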